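/- arXiv:1801.05934 — 2 statements merged into one kernel-verified Lean document; each statement's English description precedes it below -/
import Mathlib

section
/- Generalized Dirichlet principle (upper bound without divergence-free test flows): let 𝒜, ℬ ⊆ H_N be disjoint and nonempty, let h be the equilibrium potential between 𝒜 and ℬ and cap_N(𝒜,ℬ) = 𝒟_N(h). Then for every real number ε, every function f : H_N → ℝ with f ≡ 1 on 𝒜 and f ≡ 0 on ℬ, and every flow φ with (div φ)(𝒜) = ε, one has cap_N(𝒜,ℬ) ≤ ‖Φ_f − φ‖² + 2ε + 2 Σ_{η ∉ 𝒜∪ℬ} h(η) (div φ)(η). -/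
open Filter Topology Finset
open scoped Classical

noncomputable section

/-- `a(n)`: `a(0)=1`, `a(n)=n^α` for `n ≥ 1`. -/
def aZR (α : ℝ) (n : ℕ) : ℝ := if n = 0 then 1 else (n : ℝ) ^ α

/-- `g(0)=0`, `g(n)=a(n)/a(n-1)` for `n ≥ 1`. -/
def gZR (α : ℝ) (n : ℕ) : ℝ := if n = 0 then 0 else aZR α n / aZR α (n - 1)

/-- The set of configurations of `N` particles on `S`. -/
def configs (S : Type*) [Fintype S] (N : ℕ) : Finset (S → ℕ) :=
  (Fintype.piFinset fun _ : S => Finset.range (N + 1)).filter fun η => ∑ x, η x = N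

/-- `σ^{x,y} η`: move one particle from `x` to `y` (identity if `x = y` or `η x = 0`). -/
def move {S : Type*} (x y : S) (η : S → ℕ) : S → ℕ :=
  if x = y ∨ η x = 0 then η
  else Function.update (Function.update η x (η x - 1)) y (η y + 1)

/-- The zero-range generator with jump rates `r`. -/
def LgenR {S : Type*} [Fintype S] (α : ℝ) (r : S → S → ℝ)
    (f : (S → ℕ) → ℝ) (η : S → ℕ) : ℝ :=
  ∑ x, ∑ y, gZR α (η x) * r x y * (f (move x y η) - f η)

/-- The Dirichlet form of the zero-range process. -/
def DirN {S : Type*} [Fintype S] (α : ℝ) (r : S → S → ℝ)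
    (μ : (S → ℕ) → ℝ) (N : ℕ) (f : (S → ℕ) → ℝ) : ℝ :=
  (1 / 2) * ∑ η ∈ configs S N, ∑ x, ∑ y,
    μ η * gZR α (η x) * r x y * (f (move x y η) - f η) ^ 2


/-- Adjacency `η ∼ ζ` on `H_N`. -/
def AdjZR {S : Type*} (r : S → S → ℝ) (η ζ : S → ℕ) : Prop :=
  ∃ x y : S, x ≠ y ∧ 1 ≤ η x ∧ 0 < r x y + r y x ∧ ζ = move x y η

/-- Conductance `c_N(η,ζ)`. -/
def condZR {S : Type*} [Fintype S] (α : ℝ) (r : S → S → ℝ) (μ : (S → ℕ) → ℝ)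
    (η ζ : S → ℕ) : ℝ :=
  ∑ x, ∑ y, if x ≠ y ∧ 1 ≤ η x ∧ ζ = move x y η
    then μ η * gZR α (η x) * r x y else 0

/-- Symmetrized conductance `c_N^s(η,ζ)`. -/
def csymZR {S : Type*} [Fintype S] (α : ℝ) (r : S → S → ℝ) (μ : (S → ℕ) → ℝ)
    (η ζ : S → ℕ) : ℝ :=
  (condZR α r μ η ζ + condZR α r μ ζ η) / 2

/-- The flow `Φ_f` associated with a function `f`. -/
def PhiF {S : Type*} [Fintype S] (α : ℝ) (r : S → S → ℝ) (μ : (S → ℕ) → ℝ)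
    (f : (S → ℕ) → ℝ) (η ζ : S → ℕ) : ℝ :=
  f η * condZR α r μ η ζ - f ζ * condZR α r μ ζ η

/-- Squared flow norm `‖φ‖²`. -/
def flowNormSq (S : Type*) [Fintype S] (α : ℝ) (r : S → S → ℝ) (μ : (S → ℕ) → ℝ)
    (N : ℕ) (φ : (S → ℕ) → (S → ℕ) → ℝ) : ℝ :=
  (1 / 2) * ∑ η ∈ configs S N, ∑ ζ ∈ configs S N,
    if AdjZR r η ζ then (φ η ζ) ^ 2 / csymZR α r μ η ζ else 0

/-- Divergence of a flow at a configuration. -/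
def divFlow (S : Type*) [Fintype S] (r : S → S → ℝ) (N : ℕ)
    (φ : (S → ℕ) → (S → ℕ) → ℝ) (η : S → ℕ) : ℝ :=
  ∑ ζ ∈ configs S N, if AdjZR r η ζ then φ η ζ else 0

end

/-!
On each directed edge `(η, ζ)` put `u = h ζ - h η` and `ψ = Φ_f - φ`, and sum the elementary
inequality `-2 u ψ ≤ ψ² / c^s + u² c^s` over all edges. Summation by parts evaluates each term:
`Σ u² c^s = 2 𝒟(h)` by the symmetry of `c^s`; `Σ u φ = -2 Σ_η h(η) (div φ)(η)` by the antisymmetry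
of `φ`; and `Σ u Φ_f = 2 Σ_η f(η) μ(η) (𝓛 h)(η) = 2 Σ_{η ∈ 𝒜} μ(η) (𝓛 h)(η)`, since `f = 1` on `𝒜`,
`f = 0` on `ℬ` and `𝓛 h = 0` elsewhere. The same computation for `h` gives
`𝒟(h) = -Σ_{η ∈ 𝒜} μ(η) (𝓛 h)(η)` once `𝒟(h) = -Σ_η μ(η) h(η) (𝓛 h)(η)` is known; this is where the
stationarity of `μ_N` enters, and it follows edge by edge from the product form of `μ_N` and the
invariance of `m` for `r`.
-/

lemma two_mul_mul_le_sq_div_add_sq_mul {u a c : ℝ} (hc : 0 < c) :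
    2 * u * a ≤ a ^ 2 / c + u ^ 2 * c := by
  rw [div_add' _ _ _ hc.ne', le_div_iff₀ hc]
  nlinarith [sq_nonneg (a - u * c)]

lemma Finset.sum_mul_eq_sum_add_sum_sdiff_union {α : Type*} [DecidableEq α] {V A B : Finset α}
    (hA : A ⊆ V) (hB : B ⊆ V) (hAB : Disjoint A B) {w : α → ℝ}
    (hw₁ : ∀ η ∈ A, w η = 1) (hw₀ : ∀ η ∈ B, w η = 0) (g : α → ℝ) :
    ∑ η ∈ V, w η * g η = ∑ η ∈ A, g η + ∑ η ∈ V \ (A ∪ B), w η * g η := by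
  have hwA : ∑ η ∈ A, w η * g η = ∑ η ∈ A, g η :=
    sum_congr rfl fun η hη => by rw [hw₁ η hη, one_mul]
  have hwB : ∑ η ∈ B, w η * g η = 0 := sum_eq_zero fun η hη => by rw [hw₀ η hη, zero_mul]
  rw [← sum_sdiff (union_subset hA hB), sum_union hAB, hwA, hwB]
  ring

noncomputable section

namespace Network

variable {α : Type*} (V : Finset α) (adj : α → α → Prop) (c : α → α → ℝ)

def edgeFinset : Finset (α × α) := {p ∈ V ×ˢ V | adj p.1 p.2}

def divergence (φ : α → α → ℝ) (η : α) : ℝ := ∑ ζ ∈ V, if adj η ζ then φ η ζ else 0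

def generator (h : α → ℝ) (η : α) : ℝ :=
  ∑ ζ ∈ V, if adj η ζ then c η ζ * (h ζ - h η) else 0

def dirichletForm (h : α → ℝ) : ℝ :=
  (1 / 2) * ∑ p ∈ edgeFinset V adj, c p.1 p.2 * (h p.2 - h p.1) ^ 2

def flowOf (f : α → ℝ) (η ζ : α) : ℝ := f η * c η ζ - f ζ * c ζ η

def flowEnergy (ψ : α → α → ℝ) : ℝ :=
  (1 / 2) * ∑ p ∈ edgeFinset V adj, ψ p.1 p.2 ^ 2 / ((c p.1 p.2 + c p.2 p.1) / 2)

variable {V adj c}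

lemma sum_edgeFinset (F : α → α → ℝ) :
    ∑ p ∈ edgeFinset V adj, F p.1 p.2 = ∑ η ∈ V, ∑ ζ ∈ V, if adj η ζ then F η ζ else 0 := by
  rw [edgeFinset, sum_filter, sum_product]

lemma sum_edgeFinset_mul_fst (w : α → ℝ) (F : α → α → ℝ) :
    ∑ p ∈ edgeFinset V adj, w p.1 * F p.1 p.2
      = ∑ η ∈ V, w η * ∑ ζ ∈ V, if adj η ζ then F η ζ else 0 := by
  rw [sum_edgeFinset fun η ζ => w η * F η ζ]
  simp only [mul_sum, mul_ite, mul_zero]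

lemma sum_edgeFinset_swap (hsymm : ∀ η ζ, adj η ζ → adj ζ η) (F : α × α → ℝ) :
    ∑ p ∈ edgeFinset V adj, F p.swap = ∑ p ∈ edgeFinset V adj, F p :=
  sum_nbij' Prod.swap Prod.swap
    (fun p hp => by
      simp only [edgeFinset, mem_filter, mem_product, Prod.fst_swap, Prod.snd_swap] at hp ⊢
      exact ⟨hp.1.symm, hsymm _ _ hp.2⟩)
    (fun p hp => by
      simp only [edgeFinset, mem_filter, mem_product, Prod.fst_swap, Prod.snd_swap] at hp ⊢
      exact ⟨hp.1.symm, hsymm _ _ hp.2⟩)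
    (fun _ _ => rfl) (fun _ _ => rfl) (fun _ _ => rfl)

lemma sum_edgeFinset_add_swap (hsymm : ∀ η ζ, adj η ζ → adj ζ η) (F : α × α → ℝ) :
    ∑ p ∈ edgeFinset V adj, (F p + F p.swap) = 2 * ∑ p ∈ edgeFinset V adj, F p := by
  rw [sum_add_distrib, sum_edgeFinset_swap hsymm]
  ring

lemma sum_grad_mul_eq_sum_mul_divergence (hsymm : ∀ η ζ, adj η ζ → adj ζ η) {φ : α → α → ℝ}
    (hanti : ∀ η ζ, φ η ζ = -φ ζ η) (h : α → ℝ) :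
    ∑ p ∈ edgeFinset V adj, (h p.2 - h p.1) * φ p.1 p.2
      = -2 * ∑ η ∈ V, h η * divergence V adj φ η := by
  calc ∑ p ∈ edgeFinset V adj, (h p.2 - h p.1) * φ p.1 p.2
      = ∑ p ∈ edgeFinset V adj, (-(h p.1 * φ p.1 p.2) + -(h p.swap.1 * φ p.swap.1 p.swap.2)) :=
        sum_congr rfl fun p _ => by rw [Prod.fst_swap, Prod.snd_swap, hanti p.2]; ring
    _ = -2 * ∑ η ∈ V, h η * divergence V adj φ η := by
        rw [sum_edgeFinset_add_swap hsymm (fun p => -(h p.1 * φ p.1 p.2)), sum_neg_distrib,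
          sum_edgeFinset_mul_fst]
        simp only [divergence]
        ring

lemma sum_grad_mul_flowOf (hsymm : ∀ η ζ, adj η ζ → adj ζ η) (f h : α → ℝ) :
    ∑ p ∈ edgeFinset V adj, (h p.2 - h p.1) * flowOf c f p.1 p.2
      = 2 * ∑ η ∈ V, f η * generator V adj c h η := by
  calc ∑ p ∈ edgeFinset V adj, (h p.2 - h p.1) * flowOf c f p.1 p.2
      = ∑ p ∈ edgeFinset V adj, (f p.1 * (c p.1 p.2 * (h p.2 - h p.1))
          + f p.swap.1 * (c p.swap.1 p.swap.2 * (h p.swap.2 - h p.swap.1))) :=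
        sum_congr rfl fun p _ => by simp only [flowOf, Prod.fst_swap, Prod.snd_swap]; ring
    _ = 2 * ∑ η ∈ V, f η * generator V adj c h η := by
        rw [sum_edgeFinset_add_swap hsymm (fun p => f p.1 * (c p.1 p.2 * (h p.2 - h p.1))),
          sum_edgeFinset_mul_fst f fun η ζ => c η ζ * (h ζ - h η)]
        rfl

lemma sum_sq_grad_mul_symm (hsymm : ∀ η ζ, adj η ζ → adj ζ η) (h : α → ℝ) :
    ∑ p ∈ edgeFinset V adj, (h p.2 - h p.1) ^ 2 * ((c p.1 p.2 + c p.2 p.1) / 2)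
      = 2 * dirichletForm V adj c h := by
  calc ∑ p ∈ edgeFinset V adj, (h p.2 - h p.1) ^ 2 * ((c p.1 p.2 + c p.2 p.1) / 2)
      = (1 / 2) * ∑ p ∈ edgeFinset V adj, (c p.1 p.2 * (h p.2 - h p.1) ^ 2
          + c p.swap.1 p.swap.2 * (h p.swap.2 - h p.swap.1) ^ 2) := by
        rw [mul_sum]
        exact sum_congr rfl fun p _ => by simp only [Prod.fst_swap, Prod.snd_swap]; ring
    _ = 2 * dirichletForm V adj c h := by
        rw [sum_edgeFinset_add_swap hsymm (fun p => c p.1 p.2 * (h p.2 - h p.1) ^ 2),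
          dirichletForm]
        ring

lemma dirichletForm_eq_neg_sum_mul_generator (hsymm : ∀ η ζ, adj η ζ → adj ζ η)
    (hstat : ∀ η ∈ V, ∑ ζ ∈ V, (if adj η ζ then c η ζ - c ζ η else 0) = 0) (h : α → ℝ) :
    dirichletForm V adj c h = -∑ η ∈ V, h η * generator V adj c h η := by
  have hin : ∑ p ∈ edgeFinset V adj, h p.1 ^ 2 * (c p.1 p.2 - c p.2 p.1) = 0 := by
    rw [sum_edgeFinset_mul_fst (fun η => h η ^ 2) fun η ζ => c η ζ - c ζ η]
    exact sum_eq_zero fun η hη => by rw [hstat η hη, mul_zero]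
  have hswap := sum_edgeFinset_swap (V := V) hsymm fun p => c p.2 p.1 * h p.1 ^ 2
  simp only [Prod.fst_swap, Prod.snd_swap] at hswap
  have hsplit : ∑ p ∈ edgeFinset V adj, c p.1 p.2 * (h p.2 - h p.1) ^ 2
      = -2 * ∑ p ∈ edgeFinset V adj, h p.1 * (c p.1 p.2 * (h p.2 - h p.1))
        + (∑ p ∈ edgeFinset V adj, c p.1 p.2 * h p.2 ^ 2
          - ∑ p ∈ edgeFinset V adj, c p.2 p.1 * h p.1 ^ 2)
        - ∑ p ∈ edgeFinset V adj, h p.1 ^ 2 * (c p.1 p.2 - c p.2 p.1) := by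
    rw [mul_sum, ← sum_sub_distrib, ← sum_add_distrib, ← sum_sub_distrib]
    exact sum_congr rfl fun p _ => by ring
  rw [dirichletForm, hsplit, hswap, hin,
    sum_edgeFinset_mul_fst h fun η ζ => c η ζ * (h ζ - h η)]
  simp only [generator]
  ring

theorem dirichletForm_le_flowEnergy_add [DecidableEq α] (hsymm : ∀ η ζ, adj η ζ → adj ζ η)
    (hpos : ∀ p ∈ edgeFinset V adj, 0 < c p.1 p.2 + c p.2 p.1)
    (hstat : ∀ η ∈ V, ∑ ζ ∈ V, (if adj η ζ then c η ζ - c ζ η else 0) = 0)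
    {A B : Finset α} (hA : A ⊆ V) (hB : B ⊆ V) (hAB : Disjoint A B) {h f : α → ℝ}
    (hh₁ : ∀ η ∈ A, h η = 1) (hh₀ : ∀ η ∈ B, h η = 0)
    (hharm : ∀ η ∈ V, η ∉ A → η ∉ B → generator V adj c h η = 0)
    (hf₁ : ∀ η ∈ A, f η = 1) (hf₀ : ∀ η ∈ B, f η = 0)
    {φ : α → α → ℝ} (hanti : ∀ η ζ, φ η ζ = -φ ζ η) :
    dirichletForm V adj c h ≤
      flowEnergy V adj c (fun η ζ => flowOf c f η ζ - φ η ζ)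
        + 2 * ∑ η ∈ A, divergence V adj φ η
        + 2 * ∑ η ∈ V \ (A ∪ B), h η * divergence V adj φ η := by
  have hgen : ∀ w : α → ℝ, (∀ η ∈ A, w η = 1) → (∀ η ∈ B, w η = 0) →
      ∑ η ∈ V, w η * generator V adj c h η = ∑ η ∈ A, generator V adj c h η := fun w hw₁ hw₀ => by
    rw [sum_mul_eq_sum_add_sum_sdiff_union hA hB hAB hw₁ hw₀, add_eq_left]
    refine sum_eq_zero fun η hη => ?_
    obtain ⟨hηV, hηAB⟩ := mem_sdiff.mp hη
    rw [mem_union, not_or] at hηAB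
    rw [hharm η hηV hηAB.1 hηAB.2, mul_zero]
  have hCS : ∑ p ∈ edgeFinset V adj, (2 * (h p.1 - h p.2) * (flowOf c f p.1 p.2 - φ p.1 p.2)
        - (h p.2 - h p.1) ^ 2 * ((c p.1 p.2 + c p.2 p.1) / 2))
      ≤ 2 * flowEnergy V adj c (fun η ζ => flowOf c f η ζ - φ η ζ) := by
    rw [flowEnergy, ← mul_assoc, mul_one_div_cancel two_ne_zero, one_mul]
    refine sum_le_sum fun p hp => ?_
    have := two_mul_mul_le_sq_div_add_sq_mul (u := h p.1 - h p.2)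
      (a := flowOf c f p.1 p.2 - φ p.1 p.2) (half_pos (hpos p hp))
    linear_combination this
  rw [sum_sub_distrib, sum_sq_grad_mul_symm hsymm] at hCS
  have hgrad : ∑ p ∈ edgeFinset V adj, 2 * (h p.1 - h p.2) * (flowOf c f p.1 p.2 - φ p.1 p.2)
      = -2 * (∑ p ∈ edgeFinset V adj, (h p.2 - h p.1) * flowOf c f p.1 p.2
        - ∑ p ∈ edgeFinset V adj, (h p.2 - h p.1) * φ p.1 p.2) := by
    rw [mul_sub, mul_sum, mul_sum, ← sum_sub_distrib]
    exact sum_congr rfl fun p _ => by ring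
  rw [hgrad, sum_grad_mul_flowOf hsymm, sum_grad_mul_eq_sum_mul_divergence hsymm hanti,
    hgen f hf₁ hf₀, sum_mul_eq_sum_add_sum_sdiff_union hA hB hAB hh₁ hh₀] at hCS
  have hD := dirichletForm_eq_neg_sum_mul_generator hsymm hstat h
  rw [hgen h hh₁ hh₀] at hD
  linarith

end Network

@[to_additive]
lemma Fintype.prod_apply_update {S β M : Type*} [Fintype S] [DecidableEq S] [CommMonoid M]
    (G : S → β → M) (η : S → β) (x : S) (k : β) :
    ∏ z, G z (Function.update η x k z) = G x k * ∏ z ∈ {x}ᶜ, G z (η z) := by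
  rw [Fintype.prod_eq_mul_prod_compl x, Function.update_self]
  refine congrArg _ (Finset.prod_congr rfl fun z hz => ?_)
  rw [Function.update_of_ne (by simpa using hz)]

namespace ZeroRange

variable {S : Type*} {x y : S} {η : S → ℕ}

lemma move_apply (hxy : x ≠ y) (hx : 1 ≤ η x) (z : S) :
    move x y η z = if z = x then η x - 1 else if z = y then η y + 1 else η z := by
  rw [move, if_neg (not_or.mpr ⟨hxy, by omega⟩)]
  simp only [Function.update_apply]
  split_ifs <;> simp_all

lemma move_apply_left (hxy : x ≠ y) (hx : 1 ≤ η x) : move x y η x = η x - 1 := by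
  simp [move_apply hxy hx]

lemma move_apply_right (hxy : x ≠ y) (hx : 1 ≤ η x) : move x y η y = η y + 1 := by
  simp [move_apply hxy hx, hxy.symm]

lemma move_apply_lt_iff {z : S} (hxy : x ≠ y) (hx : 1 ≤ η x) : move x y η z < η z ↔ z = x := by
  rw [move_apply hxy hx]
  split_ifs <;> simp_all
  omega

lemma lt_move_apply_iff {z : S} (hxy : x ≠ y) (hx : 1 ≤ η x) : η z < move x y η z ↔ z = y := by
  rw [move_apply hxy hx]
  split_ifs <;> simp_all

lemma move_move (hxy : x ≠ y) (hx : 1 ≤ η x) : move y x (move x y η) = η := by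
  have hy : 1 ≤ move x y η y := by rw [move_apply_right hxy hx]; omega
  funext z
  rw [move_apply hxy.symm hy, move_apply_right hxy hx, move_apply_left hxy hx]
  split_ifs with h1 h2
  · subst h1; omega
  · subst h2; omega
  · rw [move_apply hxy hx, if_neg h2, if_neg h1]

lemma move_injective {x' y' : S} (hxy : x ≠ y) (hx : 1 ≤ η x) (hxy' : x' ≠ y')
    (hx' : 1 ≤ η x') (h : move x y η = move x' y' η) : x = x' ∧ y = y' := by
  constructor
  · rw [← move_apply_lt_iff (z := x) hxy' hx', ← h, move_apply_lt_iff hxy hx]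
  · rw [← lt_move_apply_iff (z := y) hxy' hx', ← h, lt_move_apply_iff hxy hx]

lemma update_move_eq (hxy : x ≠ y) (hx : 1 ≤ η x) :
    Function.update (move x y η) y (η y) = Function.update η x (η x - 1) := by
  funext z
  simp only [Function.update_apply, move_apply hxy hx]
  split_ifs <;> simp_all

lemma sum_move [Fintype S] (hxy : x ≠ y) (hx : 1 ≤ η x) : ∑ z, move x y η z = ∑ z, η z := by
  have h1 := Fintype.sum_apply_update (fun _ n => n) (move x y η) y (η y)
  have h2 := Fintype.sum_apply_update (fun _ n => n) η x (η x - 1)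
  rw [update_move_eq hxy hx] at h1
  rw [Fintype.sum_eq_add_sum_compl y (move x y η), Fintype.sum_eq_add_sum_compl x η,
    move_apply_right hxy hx]
  omega

def IsMove (r : S → S → ℝ) (η : S → ℕ) (x y : S) : Prop :=
  x ≠ y ∧ 1 ≤ η x ∧ 0 < r x y + r y x

variable {r : S → S → ℝ}

lemma adjZR_iff {ζ : S → ℕ} : AdjZR r η ζ ↔ ∃ x y, IsMove r η x y ∧ ζ = move x y η := by
  simp only [AdjZR, IsMove, and_assoc]

lemma adjZR_symm {ζ : S → ℕ} (h : AdjZR r η ζ) : AdjZR r ζ η := by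
  obtain ⟨x, y, hxy, hx, hr, rfl⟩ := h
  exact ⟨y, x, hxy.symm, by rw [move_apply_right hxy hx]; omega, by linarith,
    (move_move hxy hx).symm⟩

lemma not_isMove (hr0 : ∀ x y, 0 ≤ r x y) (h : ¬IsMove r η x y) :
    x = y ∨ η x = 0 ∨ (r x y = 0 ∧ r y x = 0) := by
  simp only [IsMove, not_and, not_lt] at h
  by_cases hxy : x = y
  · exact Or.inl hxy
  by_cases hx : η x = 0
  · exact Or.inr (Or.inl hx)
  have := h hxy (by omega)
  exact Or.inr (Or.inr ⟨by linarith [hr0 x y, hr0 y x], by linarith [hr0 x y, hr0 y x]⟩)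

variable [Fintype S]

lemma mem_configs {N : ℕ} : η ∈ configs S N ↔ ∑ x, η x = N := by
  simp only [configs, mem_filter, Fintype.mem_piFinset, mem_range, and_iff_right_iff_imp]
  rintro rfl z
  exact Nat.lt_succ_of_le (single_le_sum (fun _ _ => Nat.zero_le _) (mem_univ z))

lemma move_mem_configs {N : ℕ} (hη : η ∈ configs S N) (hxy : x ≠ y) (hx : 1 ≤ η x) :
    move x y η ∈ configs S N := by
  rw [mem_configs, sum_move hxy hx]
  exact mem_configs.mp hη

variable {α : ℝ} {μ : (S → ℕ) → ℝ}

lemma condZR_move (hxy : x ≠ y) (hx : 1 ≤ η x) :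
    condZR α r μ η (move x y η) = μ η * gZR α (η x) * r x y := by
  rw [condZR, Fintype.sum_eq_single x, Fintype.sum_eq_single y, if_pos ⟨hxy, hx, rfl⟩]
  · intro y' hy'
    refine if_neg fun ⟨hxy', hx', h⟩ => hy' ?_
    exact (move_injective hxy hx hxy' hx' h).2.symm
  · intro x' hx'
    refine sum_eq_zero fun y' _ => if_neg fun ⟨hxy', hx'', h⟩ => hx' ?_
    exact (move_injective hxy hx hxy' hx'' h).1.symm

lemma condZR_move_rev (hxy : x ≠ y) (hx : 1 ≤ η x) :
    condZR α r μ (move x y η) η = μ (move x y η) * gZR α (η y + 1) * r y x := by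
  have hy : 1 ≤ move x y η y := by rw [move_apply_right hxy hx]; omega
  have := condZR_move (α := α) (r := r) (μ := μ) hxy.symm hy
  rwa [move_move hxy hx, move_apply_right hxy hx] at this

lemma sum_adjZR_eq_sum_isMove {N : ℕ} (hη : η ∈ configs S N) (G : (S → ℕ) → ℝ) :
    ∑ ζ ∈ configs S N, (if AdjZR r η ζ then G ζ else 0)
      = ∑ x, ∑ y, if IsMove r η x y then G (move x y η) else 0 := by
  have himage : {ζ ∈ configs S N | AdjZR r η ζ}
      = (univ.filter fun p : S × S => IsMove r η p.1 p.2).image fun p => move p.1 p.2 η := by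
    ext ζ
    simp only [mem_filter, mem_image, mem_univ, true_and, adjZR_iff, Prod.exists]
    constructor
    · rintro ⟨-, x, y, hm, rfl⟩
      exact ⟨x, y, hm, rfl⟩
    · rintro ⟨x, y, hm, rfl⟩
      exact ⟨move_mem_configs hη hm.1 hm.2.1, x, y, hm, rfl⟩
  rw [← sum_filter, himage, sum_image, sum_filter, Fintype.sum_prod_type]
  rintro ⟨x, y⟩ hp ⟨x', y'⟩ hp' h
  simp only [coe_filter, mem_univ, true_and, Set.mem_ofPred_eq] at hp hp'
  obtain ⟨rfl, rfl⟩ := move_injective hp.1 hp.2.1 hp'.1 hp'.2.1 h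
  rfl

lemma sum_rate_mul_eq_sum_adjZR (hr0 : ∀ x y, 0 ≤ r x y) {N : ℕ} (hη : η ∈ configs S N)
    (F : (S → ℕ) → ℝ) (hF : F η = 0) :
    ∑ x, ∑ y, μ η * gZR α (η x) * r x y * F (move x y η)
      = ∑ ζ ∈ configs S N, if AdjZR r η ζ then condZR α r μ η ζ * F ζ else 0 := by
  rw [sum_adjZR_eq_sum_isMove hη]
  refine sum_congr rfl fun x _ => sum_congr rfl fun y _ => ?_
  split_ifs with hm
  · rw [condZR_move hm.1 hm.2.1]
  · rcases not_isMove hr0 hm with rfl | h0 | ⟨hr, -⟩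
    · rw [move, if_pos (Or.inl rfl), hF, mul_zero]
    · simp [h0, gZR]
    · rw [hr, mul_zero, zero_mul]

lemma dirN_eq_dirichletForm (hr0 : ∀ x y, 0 ≤ r x y) (N : ℕ) (h : (S → ℕ) → ℝ) :
    DirN α r μ N h = Network.dirichletForm (configs S N) (AdjZR r) (condZR α r μ) h := by
  rw [DirN, Network.dirichletForm,
    Network.sum_edgeFinset fun η ζ => condZR α r μ η ζ * (h ζ - h η) ^ 2]
  congr 1
  exact sum_congr rfl fun η hη =>
    sum_rate_mul_eq_sum_adjZR hr0 hη (fun ζ => (h ζ - h η) ^ 2) (by simp)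

lemma mul_lgenR_eq_generator (hr0 : ∀ x y, 0 ≤ r x y) {N : ℕ} (hη : η ∈ configs S N)
    (h : (S → ℕ) → ℝ) :
    μ η * LgenR α r h η = Network.generator (configs S N) (AdjZR r) (condZR α r μ) h η := by
  calc μ η * LgenR α r h η
      = ∑ x, ∑ y, μ η * gZR α (η x) * r x y * (h (move x y η) - h η) := by
        simp only [LgenR, mul_sum, mul_assoc]
    _ = _ := sum_rate_mul_eq_sum_adjZR hr0 hη (fun ζ => h ζ - h η) (sub_self _)

lemma flowNormSq_eq_flowEnergy (N : ℕ) (ψ : (S → ℕ) → (S → ℕ) → ℝ) :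
    flowNormSq S α r μ N ψ = Network.flowEnergy (configs S N) (AdjZR r) (condZR α r μ) ψ := by
  rw [flowNormSq, Network.flowEnergy,
    Network.sum_edgeFinset fun η ζ => ψ η ζ ^ 2 / ((condZR α r μ η ζ + condZR α r μ ζ η) / 2)]
  rfl

lemma aZR_pos (α : ℝ) (n : ℕ) : 0 < aZR α n := by
  unfold aZR
  split_ifs with hn
  · exact one_pos
  · exact Real.rpow_pos_of_pos (Nat.cast_pos.mpr (Nat.pos_of_ne_zero hn)) α

lemma gZR_pos (α : ℝ) {n : ℕ} (hn : n ≠ 0) : 0 < gZR α n := by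
  rw [gZR, if_neg hn]
  exact div_pos (aZR_pos α n) (aZR_pos α _)

def prodWeight (α : ℝ) (m : S → ℝ) (η : S → ℕ) : ℝ := (∏ x, m x ^ η x) / ∏ x, aZR α (η x)

variable {m : S → ℝ}

lemma prodWeight_pos (hm : ∀ x, 0 < m x) (η : S → ℕ) : 0 < prodWeight α m η :=
  div_pos (prod_pos fun x _ => pow_pos (hm x) _) (prod_pos fun _ _ => aZR_pos α _)

lemma prodWeight_mul_gZR (hx : 1 ≤ η x) :
    prodWeight α m η * gZR α (η x) = m x * prodWeight α m (Function.update η x (η x - 1)) := by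
  obtain ⟨k, hk⟩ : ∃ k, η x = k + 1 := ⟨η x - 1, by omega⟩
  rw [prodWeight, prodWeight, Fintype.prod_apply_update (fun z n => m z ^ n),
    Fintype.prod_apply_update (fun _ n => aZR α n), Fintype.prod_eq_mul_prod_compl x,
    Fintype.prod_eq_mul_prod_compl x fun z => aZR α (η z), hk, Nat.add_sub_cancel,
    gZR, if_neg k.succ_ne_zero, Nat.add_sub_cancel, pow_succ]
  have := aZR_pos α k
  have := aZR_pos α (k + 1)
  have : 0 < ∏ z ∈ {x}ᶜ, aZR α (η z) := prod_pos fun z _ => aZR_pos α _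
  field_simp

lemma prodWeight_move_mul_gZR (hxy : x ≠ y) (hx : 1 ≤ η x) :
    prodWeight α m (move x y η) * gZR α (η y + 1) * m x
      = prodWeight α m η * gZR α (η x) * m y := by
  have hy : 1 ≤ move x y η y := by rw [move_apply_right hxy hx]; omega
  have h₁ := prodWeight_mul_gZR (α := α) (m := m) hx
  have h₂ := prodWeight_mul_gZR (α := α) (m := m) hy
  rw [move_apply_right hxy hx, Nat.add_sub_cancel, update_move_eq hxy hx] at h₂
  linear_combination m x * h₂ - m y * h₁

lemma sum_adjZR_condZR_sub_eq_zero (hr0 : ∀ x y, 0 ≤ r x y) (hm : ∀ x, 0 < m x)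
    (hinv : ∀ x, ∑ y, m x * r x y = ∑ y, m y * r y x) {C : ℝ}
    (hμ : ∀ η, μ η = C * prodWeight α m η) {N : ℕ} (hη : η ∈ configs S N) :
    ∑ ζ ∈ configs S N, (if AdjZR r η ζ then condZR α r μ η ζ - condZR α r μ ζ η else 0) = 0 := by
  have hterm : ∀ x y, (if IsMove r η x y
      then condZR α r μ η (move x y η) - condZR α r μ (move x y η) η else 0)
        = μ η * gZR α (η x) / m x * (m x * r x y - m y * r y x) := by
    intro x y
    split_ifs with hmv
    · obtain ⟨hxy, hx, -⟩ := hmv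
      rw [condZR_move hxy hx, condZR_move_rev hxy hx, hμ, hμ]
      have := prodWeight_move_mul_gZR (α := α) (m := m) hxy hx
      field_simp [(hm x).ne']
      linear_combination -(C * r y x) * this
    · rcases not_isMove hr0 hmv with rfl | h0 | ⟨h₁, h₂⟩
      · ring
      · simp [h0, gZR]
      · rw [h₁, h₂]; ring
  rw [sum_adjZR_eq_sum_isMove hη fun ζ => condZR α r μ η ζ - condZR α r μ ζ η]
  simp only [hterm, ← mul_sum, sum_sub_distrib, hinv, sub_self, mul_zero, sum_const_zero]

lemma condZR_add_condZR_pos (hr0 : ∀ x y, 0 ≤ r x y) (hμ : ∀ η, 0 < μ η) {ζ : S → ℕ}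
    (h : AdjZR r η ζ) : 0 < condZR α r μ η ζ + condZR α r μ ζ η := by
  obtain ⟨x, y, hxy, hx, hr, rfl⟩ := h
  rw [condZR_move hxy hx, condZR_move_rev hxy hx]
  have ha : 0 < μ η * gZR α (η x) := mul_pos (hμ η) (gZR_pos α (by omega))
  have hb : 0 < μ (move x y η) * gZR α (η y + 1) := mul_pos (hμ _) (gZR_pos α (by omega))
  rcases (hr0 x y).lt_or_eq with h | h
  · nlinarith [hr0 y x]
  · have : 0 < r y x := by linarith
    rw [← h]
    nlinarith

end ZeroRange

end

theorem stmt_4_general {S : Type*} [Fintype S] (α : ℝ)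
    (r : S → S → ℝ) (hr0 : ∀ x y, 0 ≤ r x y)
    (m : S → ℝ) (hm : ∀ x, 0 < m x)
    (hinv : ∀ x, ∑ y, m x * r x y = ∑ y, m y * r y x)
    (Mstar : ℝ) (hMstar : IsGreatest (Set.range m) Mstar)
    (mstar : S → ℝ) (hmstar : ∀ x, mstar x = m x / Mstar)
    (Z : ℕ → ℝ)
    (hZ : ∀ N, Z N = (N : ℝ) ^ α *
      ∑ η ∈ configs S N, (∏ x, mstar x ^ η x) / ∏ x, aZR α (η x))
    (μ : ℕ → (S → ℕ) → ℝ)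
    (hμ : ∀ N η, μ N η =
      (N : ℝ) ^ α * (∏ x, mstar x ^ η x) / (Z N * ∏ x, aZR α (η x)))
    (N : ℕ) (hN : 1 ≤ N)
    (A B : Finset (S → ℕ)) (hA : A ⊆ configs S N) (hB : B ⊆ configs S N)
    (hdisj : Disjoint A B) (hAne : A.Nonempty)
    -- the equilibrium potential between A and B
    (h : (S → ℕ) → ℝ)
    (hh1 : ∀ η ∈ A, h η = 1) (hh0 : ∀ η ∈ B, h η = 0)
    (hharm : ∀ η ∈ configs S N, η ∉ A → η ∉ B → LgenR α r h η = 0)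
    -- test function and test flow
    (ε : ℝ) (f : (S → ℕ) → ℝ)
    (hf1 : ∀ η ∈ A, f η = 1) (hf0 : ∀ η ∈ B, f η = 0)
    (φ : (S → ℕ) → (S → ℕ) → ℝ)
    (hanti : ∀ η ζ, φ η ζ = -φ ζ η)
    (hdiv : ∑ η ∈ A, divFlow S r N φ η = ε) :
    DirN α r (μ N) N h ≤
      flowNormSq S α r (μ N) N (fun η ζ => PhiF α r (μ N) f η ζ - φ η ζ) +
        2 * ε + 2 * ∑ η ∈ configs S N \ (A ∪ B), h η * divFlow S r N φ η := by
  have hmstar_pos : ∀ x, 0 < mstar x := fun x => by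
    obtain ⟨y, hy⟩ := hMstar.1
    rw [hmstar]
    exact div_pos (hm x) (hy ▸ hm y)
  have hinv' : ∀ x, ∑ y, mstar x * r x y = ∑ y, mstar y * r y x := fun x => by
    simp only [hmstar, div_mul_eq_mul_div, ← sum_div, hinv]
  have hNα : 0 < (N : ℝ) ^ α := Real.rpow_pos_of_pos (by exact_mod_cast hN) α
  have hZ_pos : 0 < Z N := by
    rw [hZ]
    exact mul_pos hNα
      (sum_pos (fun η _ => ZeroRange.prodWeight_pos hmstar_pos η) (hAne.mono hA))
  have hμ_eq : ∀ η, μ N η = (N : ℝ) ^ α / Z N * ZeroRange.prodWeight α mstar η := fun η => by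
    rw [hμ, ZeroRange.prodWeight, mul_div_mul_comm]
  have hμ_pos : ∀ η, 0 < μ N η := fun η => by
    rw [hμ_eq]
    exact mul_pos (div_pos hNα hZ_pos) (ZeroRange.prodWeight_pos hmstar_pos η)
  rw [ZeroRange.dirN_eq_dirichletForm hr0, ZeroRange.flowNormSq_eq_flowEnergy, ← hdiv]
  exact Network.dirichletForm_le_flowEnergy_add (fun _ _ => ZeroRange.adjZR_symm)
    (fun p hp => ZeroRange.condZR_add_condZR_pos hr0 hμ_pos (mem_filter.mp hp).2)
    (fun η hη => ZeroRange.sum_adjZR_condZR_sub_eq_zero hr0 hmstar_pos hinv' hμ_eq hη)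
    hA hB hdisj hh1 hh0
    (fun η hη hηA hηB => by
      rw [← ZeroRange.mul_lgenR_eq_generator hr0 hη, hharm η hη hηA hηB, mul_zero])
    hf1 hf0 hanti

theorem stmt_4 {S : Type*} [Fintype S] (α : ℝ) (hα : 2 < α)
    (r : S → S → ℝ) (hr0 : ∀ x y, 0 ≤ r x y) (hrdiag : ∀ x, r x x = 0)
    (hirr : ∀ x y : S, Relation.ReflTransGen (fun a b => 0 < r a b) x y)
    (m : S → ℝ) (hm : ∀ x, 0 < m x)
    (hinv : ∀ x, ∑ y, m x * r x y = ∑ y, m y * r y x)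
    (Mstar : ℝ) (hMstar : IsGreatest (Set.range m) Mstar)
    (mstar : S → ℝ) (hmstar : ∀ x, mstar x = m x / Mstar)
    (Z : ℕ → ℝ)
    (hZ : ∀ N, Z N = (N : ℝ) ^ α *
      ∑ η ∈ configs S N, (∏ x, mstar x ^ η x) / ∏ x, aZR α (η x))
    (μ : ℕ → (S → ℕ) → ℝ)
    (hμ : ∀ N η, μ N η =
      (N : ℝ) ^ α * (∏ x, mstar x ^ η x) / (Z N * ∏ x, aZR α (η x)))
    (N : ℕ) (hN : 1 ≤ N)
    (A B : Finset (S → ℕ)) (hA : A ⊆ configs S N) (hB : B ⊆ configs S N)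
    (hdisj : Disjoint A B) (hAne : A.Nonempty) (hBne : B.Nonempty)
    -- the equilibrium potential between A and B
    (h : (S → ℕ) → ℝ)
    (hh1 : ∀ η ∈ A, h η = 1) (hh0 : ∀ η ∈ B, h η = 0)
    (hharm : ∀ η ∈ configs S N, η ∉ A → η ∉ B → LgenR α r h η = 0)
    -- test function and test flow
    (ε : ℝ) (f : (S → ℕ) → ℝ)
    (hf1 : ∀ η ∈ A, f η = 1) (hf0 : ∀ η ∈ B, f η = 0)
    (φ : (S → ℕ) → (S → ℕ) → ℝ)
    (hanti : ∀ η ζ, φ η ζ = -φ ζ η)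
    (hsupp : ∀ η ζ, ¬AdjZR r η ζ → φ η ζ = 0)
    (hdiv : ∑ η ∈ A, divFlow S r N φ η = ε) :
    DirN α r (μ N) N h ≤
      flowNormSq S α r (μ N) N (fun η ζ => PhiF α r (μ N) f η ζ - φ η ζ) +
        2 * ε + 2 * ∑ η ∈ configs S N \ (A ∪ B), h η * divFlow S r N φ η :=
  stmt_4_general α r hr0 m hm hinv Mstar hMstar mstar hmstar Z hZ μ hμ N hN A B hA hB hdisj hAne h
    hh1 hh0 hharm ε f hf1 hf0 φ hanti hdiv
end

section
/- For every nonempty subset S₀ ⊆ S and every sequence (d_N) of positive integers with d_N → ∞ and d_N/N → 0, there exist a constant C > 0 and N₀ ∈ ℕ such that for all N > N₀: Σ_{ζ ∈ H_{N,S₀}(d_N)} m⋆^ζ/a(ζ) < C/(N^α · d_N^{α−1}), where H_{N,S₀}(d) = {ζ ∈ H_{N,S₀} : ζ_x < N − d for all x ∈ S₀ ∩ S⋆}. -/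
open Filter Topology Finset
open scoped Classical

/-!
Split the configurations according to a site `x` of maximal occupation, so that
`ζ x ≥ N / |S₀|`. If `x ∈ S⋆`, the factor `1 / a(ζ x)` is `O(N^{-α})`, and removing the
particles at `x` leaves a configuration of some size `M ∈ (d_N, N]`. By the same max-site
argument, the configurations of size `M` have total weight `∑ 1 / a(η) = O(M^{-α})`, and the
sum over `M > d_N` is `O(d_N^{1-α})`. If `x ∉ S⋆`, then `m⋆(x) < 1` and the factor
`m⋆(x)^{ζ x} ≤ m⋆(x)^{N / |S₀|}` decays exponentially. This beats both the `(N + 1)^{|S₀|}`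
configurations and the factor `N^α d_N^{α-1} ≤ N^{2α-1}`.
-/

lemma aZR_pos (α : ℝ) (n : ℕ) : 0 < aZR α n := by
  unfold aZR
  split_ifs with hn
  · exact one_pos
  · exact Real.rpow_pos_of_pos (Nat.cast_pos.2 (Nat.pos_of_ne_zero hn)) α

@[simp]
lemma aZR_zero (α : ℝ) : aZR α 0 = 1 := if_pos rfl

lemma one_le_aZR {α : ℝ} (hα : 0 ≤ α) (n : ℕ) : 1 ≤ aZR α n := by
  unfold aZR
  split_ifs with hn
  · exact le_rfl
  · exact Real.one_le_rpow (Nat.one_le_cast.2 (Nat.one_le_iff_ne_zero.2 hn)) hα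

lemma inv_aZR_le_inv_sq {α : ℝ} (hα : 2 ≤ α) {n : ℕ} (hn : n ≠ 0) :
    (aZR α n)⁻¹ ≤ ((n : ℝ) ^ 2)⁻¹ := by
  have h1 : (1 : ℝ) ≤ n := Nat.one_le_cast.2 (Nat.one_le_iff_ne_zero.2 hn)
  rw [aZR, if_neg hn, ← Real.rpow_natCast]
  exact inv_anti₀ (by positivity) (Real.rpow_le_rpow_of_exponent_le h1 (by exact_mod_cast hα))

lemma sum_range_inv_aZR_le_three {α : ℝ} (hα : 2 ≤ α) (n : ℕ) :
    ∑ i ∈ range n, (aZR α i)⁻¹ ≤ 3 := by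
  rcases Nat.eq_zero_or_pos n with rfl | hn
  · norm_num
  rw [range_eq_Ico, sum_eq_sum_Ico_succ_bot hn, aZR_zero, inv_one, Finset.Ico_add_one_left_eq_Ioo]
  have htail : ∑ i ∈ Ioo 0 n, (aZR α i)⁻¹ ≤ ∑ i ∈ Ioo 0 n, ((i : ℝ) ^ 2)⁻¹ :=
    sum_le_sum fun i hi => inv_aZR_le_inv_sq hα (mem_Ioo.1 hi).1.ne'
  have hbasel : ∑ i ∈ Ioo 0 n, ((i : ℝ) ^ 2)⁻¹ ≤ 2 := by
    simpa using sum_Ioo_inv_sq_le (α := ℝ) 0 n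
  linarith

lemma sum_Ioc_inv_rpow_le {α : ℝ} (hα : 2 ≤ α) {a : ℕ} (ha : 0 < a) (n : ℕ) :
    ∑ M ∈ Ioc a n, ((M : ℝ) ^ α)⁻¹ ≤ 2 / (a : ℝ) ^ (α - 1) := by
  have ha' : (0 : ℝ) < a := Nat.cast_pos.2 ha
  have hterm : ∀ M ∈ Ioc a n, ((M : ℝ) ^ α)⁻¹ ≤ ((a : ℝ) ^ (α - 2))⁻¹ * ((M : ℝ) ^ 2)⁻¹ := by
    intro M hM
    have haM : (a : ℝ) ≤ M := by exact_mod_cast (mem_Ioc.1 hM).1.le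
    have hM0 : (0 : ℝ) < M := ha'.trans_le haM
    rw [← mul_inv]
    refine inv_anti₀ (by positivity) ?_
    calc (a : ℝ) ^ (α - 2) * (M : ℝ) ^ 2 ≤ (M : ℝ) ^ (α - 2) * (M : ℝ) ^ 2 := by
          gcongr
      _ = (M : ℝ) ^ α := by
          rw [← Real.rpow_natCast, ← Real.rpow_add hM0]
          norm_num
  calc ∑ M ∈ Ioc a n, ((M : ℝ) ^ α)⁻¹
      ≤ ((a : ℝ) ^ (α - 2))⁻¹ * ∑ M ∈ Ioo a (n + 1), ((M : ℝ) ^ 2)⁻¹ := by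
        rw [mul_sum]
        refine (sum_le_sum hterm).trans
          (sum_le_sum_of_subset_of_nonneg ?_ fun _ _ _ => by positivity)
        intro M hM
        simp only [mem_Ioc, mem_Ioo] at hM ⊢
        omega
    _ ≤ ((a : ℝ) ^ (α - 2))⁻¹ * (2 / a) := by
        gcongr
        refine (sum_Ioo_inv_sq_le a (n + 1)).trans ?_
        gcongr
        linarith
    _ = 2 / (a : ℝ) ^ (α - 1) := by
        rw [show α - 1 = (α - 2) + 1 by ring, Real.rpow_add_one ha'.ne']
        field_simp

lemma sum_comp_le_sum_of_injOn {α β : Type*} {s : Finset α} {t : Finset β} {g : α → β}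
    (hg : Set.InjOn g s) (hst : ∀ a ∈ s, g a ∈ t) {f : β → ℝ} (hf : ∀ b ∈ t, 0 ≤ f b) :
    ∑ a ∈ s, f (g a) ≤ ∑ b ∈ t, f b := by
  rw [← sum_image hg]
  exact sum_le_sum_of_subset_of_nonneg (image_subset_iff.2 hst) fun b hb _ => hf b hb

section Configurations

open Function

variable {ι : Type*} [Fintype ι] {g : ι → ℝ}

lemma mem_configs_iff {N : ℕ} {η : ι → ℕ} : η ∈ configs ι N ↔ ∑ i, η i = N := by
  refine ⟨fun h => (mem_filter.1 h).2, fun h => mem_filter.2 ⟨?_, h⟩⟩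
  refine Fintype.mem_piFinset.2 fun i => mem_range.2 (Nat.lt_succ_of_le ?_)
  exact h ▸ single_le_sum (fun j _ => Nat.zero_le (η j)) (mem_univ i)

lemma card_configs_le (N : ℕ) : #(configs ι N) ≤ (N + 1) ^ Fintype.card ι := by
  refine (card_filter_le _ _).trans ?_
  simp [Fintype.card_piFinset]

lemma sum_le_card_mul_of_forall_le {η : ι → ℕ} {i : ι} (h : ∀ j, η j ≤ η i) :
    ∑ j, η j ≤ Fintype.card ι * η i := by
  simpa using sum_le_card_nsmul univ η (η i) fun j _ => h j

lemma sum_update_zero_add (η : ι → ℕ) (i : ι) : ∑ j, update η i 0 j + η i = ∑ j, η j := by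
  rw [sum_update_of_mem (mem_univ i), zero_add, ← sum_erase_add _ _ (mem_univ i),
    sdiff_singleton_eq_erase]

lemma update_zero_injOn (i : ι) (N : ℕ) :
    Set.InjOn (fun η : ι → ℕ => update η i 0) {η | ∑ j, η j = N} := by
  intro η₁ (h₁ : ∑ j, η₁ j = N) η₂ (h₂ : ∑ j, η₂ j = N) (h : update η₁ i 0 = update η₂ i 0)
  have hi : η₁ i = η₂ i := by
    have e₁ := sum_update_zero_add η₁ i
    have e₂ := sum_update_zero_add η₂ i
    rw [h] at e₁
    omega
  calc η₁ = update (update η₁ i 0) i (η₁ i) := by rw [update_idem, update_eq_self]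
    _ = update (update η₂ i 0) i (η₂ i) := by rw [h, hi]
    _ = η₂ := by rw [update_idem, update_eq_self]

lemma update_zero_mem_configs {N : ℕ} {η : ι → ℕ} (hη : η ∈ configs ι N) (i : ι) :
    update η i 0 ∈ configs ι (N - η i) := by
  rw [mem_configs_iff] at hη ⊢
  have := sum_update_zero_add η i
  omega

lemma sum_le_sum_sum_filter_forall_le {β : Type*} [Nonempty ι] [LinearOrder β]
    (s : Finset (ι → β)) {f : (ι → β) → ℝ} (hf : ∀ ζ ∈ s, 0 ≤ f ζ) :
    ∑ ζ ∈ s, f ζ ≤ ∑ i, ∑ ζ ∈ s with ∀ j, ζ j ≤ ζ i, f ζ := by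
  simp_rw [sum_filter]
  rw [sum_comm]
  refine sum_le_sum fun ζ hζ => ?_
  obtain ⟨i, -, hi⟩ := exists_max_image univ ζ univ_nonempty
  calc f ζ = if ∀ j, ζ j ≤ ζ i then f ζ else 0 := (if_pos fun j => hi j (mem_univ j)).symm
    _ ≤ ∑ i, if ∀ j, ζ j ≤ ζ i then f ζ else 0 :=
      single_le_sum (f := fun i => if ∀ j, ζ j ≤ ζ i then f ζ else 0)
        (fun j _ => by split_ifs <;> simp [hf ζ hζ]) (mem_univ i)

noncomputable def invA (α : ℝ) (η : ι → ℕ) : ℝ := ∏ i, (aZR α (η i))⁻¹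

lemma invA_nonneg (α : ℝ) (η : ι → ℕ) : 0 ≤ invA α η :=
  prod_nonneg fun i _ => (inv_pos.2 (aZR_pos α (η i))).le

lemma invA_eq_mul_update (α : ℝ) (η : ι → ℕ) (i : ι) :
    invA α η = (aZR α (η i))⁻¹ * invA α (update η i 0) := by
  rw [invA, invA, Fintype.prod_eq_mul_prod_compl i,
    Fintype.prod_eq_mul_prod_compl i fun j => (aZR α (update η i 0 j))⁻¹,
    update_self, aZR_zero, inv_one, one_mul]
  exact congrArg _ (prod_congr rfl fun j hj => by rw [update_of_ne (by simpa using hj)])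

lemma invA_le_of_forall_le {α : ℝ} (hα : 0 ≤ α) {N : ℕ} (hN : 0 < N) {η : ι → ℕ} {i : ι}
    (hsum : ∑ j, η j = N) (hmax : ∀ j, η j ≤ η i) :
    invA α η ≤ (Fintype.card ι : ℝ) ^ α / (N : ℝ) ^ α * invA α (update η i 0) := by
  have hNk : N ≤ Fintype.card ι * η i := hsum ▸ sum_le_card_mul_of_forall_le hmax
  have hi : η i ≠ 0 := by
    rintro h
    rw [h] at hNk
    omega
  rw [invA_eq_mul_update α η i]
  refine mul_le_mul_of_nonneg_right ?_ (invA_nonneg α _)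
  rw [aZR, if_neg hi, ← one_div, div_le_div_iff₀ (by positivity) (by positivity), one_mul,
    ← Real.mul_rpow (by positivity) (by positivity)]
  exact Real.rpow_le_rpow (by positivity) (by exact_mod_cast hNk) hα

lemma sum_invA_piFinset_range_le {α : ℝ} (hα : 2 ≤ α) (n : ℕ) :
    ∑ η ∈ Fintype.piFinset (fun _ : ι => range n), invA α η ≤ 3 ^ Fintype.card ι :=
  calc ∑ η ∈ Fintype.piFinset (fun _ : ι => range n), invA α η
      = ∏ _i : ι, ∑ m ∈ range n, (aZR α m)⁻¹ :=
        (prod_univ_sum (fun _ => range n) fun _ m => (aZR α m)⁻¹).symm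
    _ ≤ ∏ _i : ι, (3 : ℝ) :=
        prod_le_prod (fun _ _ => sum_nonneg fun m _ => (inv_pos.2 (aZR_pos α m)).le)
          fun _ _ => sum_range_inv_aZR_le_three hα n
    _ = 3 ^ Fintype.card ι := by rw [prod_const, card_univ]

lemma sum_invA_configs_le [Nonempty ι] {α : ℝ} (hα : 2 ≤ α) {M : ℕ} (hM : 0 < M) :
    ∑ η ∈ configs ι M, invA α η
      ≤ Fintype.card ι * 3 ^ Fintype.card ι * (Fintype.card ι : ℝ) ^ α / (M : ℝ) ^ α := by
  set k := Fintype.card ι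
  refine (sum_le_sum_sum_filter_forall_le _ fun η _ => invA_nonneg α η).trans ?_
  calc ∑ i, ∑ η ∈ configs ι M with ∀ j, η j ≤ η i, invA α η
      ≤ ∑ _i : ι, (k : ℝ) ^ α / (M : ℝ) ^ α * 3 ^ k := sum_le_sum fun i _ => ?_
    _ = k * 3 ^ k * (k : ℝ) ^ α / (M : ℝ) ^ α := by
        rw [sum_const, card_univ, nsmul_eq_mul]
        ring
  set A := (configs ι M).filter fun η => ∀ j, η j ≤ η i
  have hmaps : ∀ η ∈ A, update η i 0 ∈ Fintype.piFinset (fun _ : ι => range (M + 1)) := by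
    intro η hη
    have hη' := Fintype.mem_piFinset.1 (mem_filter.1 (mem_filter.1 hη).1).1
    refine Fintype.mem_piFinset.2 fun j => mem_range.2 ?_
    exact (update_le_self_iff.2 (Nat.zero_le (η i)) j).trans_lt (mem_range.1 (hη' j))
  have hinj : Set.InjOn (fun η : ι → ℕ => update η i 0) A :=
    (update_zero_injOn i M).mono fun η hη => mem_configs_iff.1 (mem_filter.1 hη).1
  calc ∑ η ∈ A, invA α η
      ≤ ∑ η ∈ A, (k : ℝ) ^ α / (M : ℝ) ^ α * invA α (update η i 0) :=
        sum_le_sum fun η hη => invA_le_of_forall_le (by linarith) hM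
          (mem_configs_iff.1 (mem_filter.1 hη).1) (mem_filter.1 hη).2
    _ = (k : ℝ) ^ α / (M : ℝ) ^ α * ∑ η ∈ A, invA α (update η i 0) := (mul_sum _ _ _).symm
    _ ≤ (k : ℝ) ^ α / (M : ℝ) ^ α * 3 ^ k := by
        refine mul_le_mul_of_nonneg_left ?_ (by positivity)
        exact (sum_comp_le_sum_of_injOn hinj hmaps fun η _ => invA_nonneg α η).trans
          (sum_invA_piFinset_range_le hα (M + 1))

noncomputable def tailConst (k : ℕ) (α : ℝ) : ℝ := 2 * (k * 3 ^ k * (k : ℝ) ^ α)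

lemma tailConst_nonneg (k : ℕ) (α : ℝ) : 0 ≤ tailConst k α := by
  unfold tailConst
  positivity

lemma sum_Ioc_sum_invA_configs_le [Nonempty ι] {α : ℝ} (hα : 2 ≤ α) {d : ℕ} (hd : 0 < d)
    (n : ℕ) :
    ∑ M ∈ Ioc d n, ∑ η ∈ configs ι M, invA α η
      ≤ tailConst (Fintype.card ι) α / (d : ℝ) ^ (α - 1) := by
  set c : ℝ := Fintype.card ι * 3 ^ Fintype.card ι * (Fintype.card ι : ℝ) ^ α
  calc ∑ M ∈ Ioc d n, ∑ η ∈ configs ι M, invA α η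
      ≤ ∑ M ∈ Ioc d n, c * ((M : ℝ) ^ α)⁻¹ := sum_le_sum fun M hM =>
        (sum_invA_configs_le hα (hd.trans (mem_Ioc.1 hM).1)).trans_eq (div_eq_mul_inv _ _)
    _ = c * ∑ M ∈ Ioc d n, ((M : ℝ) ^ α)⁻¹ := (mul_sum _ _ _).symm
    _ ≤ c * (2 / (d : ℝ) ^ (α - 1)) :=
        mul_le_mul_of_nonneg_left (sum_Ioc_inv_rpow_le hα hd n) (by positivity)
    _ = tailConst (Fintype.card ι) α / (d : ℝ) ^ (α - 1) := by
        rw [tailConst]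
        ring

lemma sum_invA_le_of_forall_le_of_add_lt {α : ℝ} (hα : 2 ≤ α) {d N : ℕ} (hd : 0 < d) {x : ι}
    {A : Finset (ι → ℕ)} (hA : ∀ ζ ∈ A, ∑ j, ζ j = N ∧ (∀ j, ζ j ≤ ζ x) ∧ ζ x + d < N) :
    ∑ ζ ∈ A, invA α ζ
      ≤ (Fintype.card ι : ℝ) ^ α * tailConst (Fintype.card ι) α /
          ((N : ℝ) ^ α * (d : ℝ) ^ (α - 1)) := by
  have : Nonempty ι := ⟨x⟩
  set k := Fintype.card ι
  let g : (ι → ℕ) → (_ : ℕ) × (ι → ℕ) := fun ζ => ⟨N - ζ x, update ζ x 0⟩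
  have hinj : Set.InjOn g A := fun ζ₁ h₁ ζ₂ h₂ h =>
    update_zero_injOn x N (hA ζ₁ h₁).1 (hA ζ₂ h₂).1 (congrArg Sigma.snd h)
  have hmaps : ∀ ζ ∈ A, g ζ ∈ (Ioc d N).sigma (configs ι) := by
    intro ζ hζ
    obtain ⟨hsum, -, hlt⟩ := hA ζ hζ
    exact mem_sigma.2 ⟨show N - ζ x ∈ Ioc d N from mem_Ioc.2 ⟨by omega, by omega⟩,
      update_zero_mem_configs (mem_configs_iff.2 hsum) x⟩
  calc ∑ ζ ∈ A, invA α ζ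
      ≤ ∑ ζ ∈ A, (k : ℝ) ^ α / (N : ℝ) ^ α * invA α (g ζ).2 := sum_le_sum fun ζ hζ => by
        obtain ⟨hsum, hmax, hlt⟩ := hA ζ hζ
        exact invA_le_of_forall_le (by linarith) (by omega) hsum hmax
    _ = (k : ℝ) ^ α / (N : ℝ) ^ α * ∑ ζ ∈ A, invA α (g ζ).2 := (mul_sum _ _ _).symm
    _ ≤ (k : ℝ) ^ α / (N : ℝ) ^ α * ∑ p ∈ (Ioc d N).sigma (configs ι), invA α p.2 :=
        mul_le_mul_of_nonneg_left
          (sum_comp_le_sum_of_injOn hinj hmaps fun p _ => invA_nonneg α p.2) (by positivity)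
    _ = (k : ℝ) ^ α / (N : ℝ) ^ α * ∑ M ∈ Ioc d N, ∑ η ∈ configs ι M, invA α η := by
        rw [sum_sigma]
    _ ≤ (k : ℝ) ^ α / (N : ℝ) ^ α * (tailConst k α / (d : ℝ) ^ (α - 1)) :=
        mul_le_mul_of_nonneg_left (sum_Ioc_sum_invA_configs_le hα hd N) (by positivity)
    _ = _ := div_mul_div_comm _ _ _ _

noncomputable def mWeight (g : ι → ℝ) (α : ℝ) (ζ : ι → ℕ) : ℝ :=
  (∏ x, g x ^ ζ x) / ∏ x, aZR α (ζ x)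

lemma mWeight_nonneg (hg0 : ∀ x, 0 ≤ g x) (α : ℝ) (ζ : ι → ℕ) : 0 ≤ mWeight g α ζ :=
  div_nonneg (prod_nonneg fun x _ => pow_nonneg (hg0 x) _)
    (prod_pos fun x _ => aZR_pos α (ζ x)).le

lemma mWeight_le_invA (hg0 : ∀ x, 0 ≤ g x) (hg1 : ∀ x, g x ≤ 1) (α : ℝ) (ζ : ι → ℕ) :
    mWeight g α ζ ≤ invA α ζ := by
  rw [mWeight, invA, prod_inv_distrib, div_eq_mul_inv]
  exact mul_le_of_le_one_left (inv_nonneg.2 (prod_pos fun x _ => aZR_pos α (ζ x)).le)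
    (prod_le_one (fun x _ => pow_nonneg (hg0 x) _) fun x _ => pow_le_one₀ (hg0 x) (hg1 x))

lemma mWeight_le_pow {α : ℝ} (hα : 0 ≤ α) (hg0 : ∀ x, 0 ≤ g x) (hg1 : ∀ x, g x ≤ 1)
    (ζ : ι → ℕ) (i : ι) : mWeight g α ζ ≤ g i ^ ζ i := by
  have hden : 1 ≤ ∏ x, aZR α (ζ x) := one_le_prod fun x _ => one_le_aZR hα (ζ x)
  calc mWeight g α ζ ≤ ∏ x, g x ^ ζ x :=
        div_le_self (prod_nonneg fun x _ => pow_nonneg (hg0 x) _) hden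
    _ = g i ^ ζ i * ∏ x ∈ univ.erase i, g x ^ ζ x := (mul_prod_erase _ _ (mem_univ i)).symm
    _ ≤ g i ^ ζ i := mul_le_of_le_one_right (pow_nonneg (hg0 i) _)
        (prod_le_one (fun x _ => pow_nonneg (hg0 x) _) fun x _ => pow_le_one₀ (hg0 x) (hg1 x))

lemma sum_mWeight_le_of_forall_le {α : ℝ} (hα : 0 ≤ α) (hg0 : ∀ x, 0 ≤ g x)
    (hg1 : ∀ x, g x ≤ 1) {N : ℕ} {x : ι} {A : Finset (ι → ℕ)}
    (hA : ∀ ζ ∈ A, ζ ∈ configs ι N ∧ ∀ j, ζ j ≤ ζ x) :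
    ∑ ζ ∈ A, mWeight g α ζ
      ≤ ((N : ℝ) + 1) ^ Fintype.card ι * (g x ^ ((Fintype.card ι : ℝ)⁻¹)) ^ N := by
  set k := Fintype.card ι
  set ρ := g x ^ ((k : ℝ)⁻¹)
  have hk : k ≠ 0 := (Fintype.card_pos_iff.2 ⟨x⟩).ne'
  have hρk : ρ ^ k = g x := Real.rpow_inv_natCast_pow (hg0 x) hk
  have hρ0 : 0 ≤ ρ := Real.rpow_nonneg (hg0 x) _
  have hρ1 : ρ ≤ 1 := Real.rpow_le_one (hg0 x) (hg1 x) (by positivity)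
  have hpt : ∀ ζ ∈ A, mWeight g α ζ ≤ ρ ^ N := fun ζ hζ => by
    obtain ⟨hconf, hmax⟩ := hA ζ hζ
    have hNk : N ≤ k * ζ x := mem_configs_iff.1 hconf ▸ sum_le_card_mul_of_forall_le hmax
    calc mWeight g α ζ ≤ g x ^ ζ x := mWeight_le_pow hα hg0 hg1 ζ x
      _ = ρ ^ (k * ζ x) := by rw [pow_mul, hρk]
      _ ≤ ρ ^ N := pow_le_pow_of_le_one hρ0 hρ1 hNk
  have hcard : (#A : ℝ) ≤ ((N : ℝ) + 1) ^ k := by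
    exact_mod_cast (card_le_card fun ζ hζ => (hA ζ hζ).1).trans (card_configs_le N)
  calc ∑ ζ ∈ A, mWeight g α ζ ≤ #A • ρ ^ N := sum_le_card_nsmul _ _ _ hpt
    _ ≤ ((N : ℝ) + 1) ^ k * ρ ^ N := by
        rw [nsmul_eq_mul]
        exact mul_le_mul_of_nonneg_right hcard (pow_nonneg hρ0 N)

lemma sum_mWeight_filter_forall_le_lt {α : ℝ} (hα : 2 ≤ α) (hg0 : ∀ x, 0 ≤ g x)
    (hg1 : ∀ x, g x ≤ 1) (P : ι → Prop) {d N : ℕ} (hd : 0 < d) (hdN : d ≤ N)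
    {s : Finset (ι → ℕ)} (hs : ∀ ζ ∈ s, ζ ∈ configs ι N ∧ ∀ x, P x → ζ x + d < N)
    (hdecay : ∀ x, ¬ P x → ((N : ℝ) + 1) ^ Fintype.card ι * (N : ℝ) ^ (2 * α - 1) *
      (g x ^ ((Fintype.card ι : ℝ)⁻¹)) ^ N < 1) (x : ι) :
    ∑ ζ ∈ s with ∀ j, ζ j ≤ ζ x, mWeight g α ζ
      < ((Fintype.card ι : ℝ) ^ α * tailConst (Fintype.card ι) α + 1) /
          ((N : ℝ) ^ α * (d : ℝ) ^ (α - 1)) := by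
  set k := Fintype.card ι
  set K := (k : ℝ) ^ α * tailConst k α
  have hK : 0 ≤ K := mul_nonneg (by positivity) (tailConst_nonneg k α)
  have hN : (0 : ℝ) < N := Nat.cast_pos.2 (hd.trans_le hdN)
  have hDle : (N : ℝ) ^ α * (d : ℝ) ^ (α - 1) ≤ (N : ℝ) ^ (2 * α - 1) := by
    rw [show 2 * α - 1 = α + (α - 1) by ring, Real.rpow_add hN]
    gcongr
    linarith
  set D := (N : ℝ) ^ α * (d : ℝ) ^ (α - 1)
  have hD : 0 < D :=
    mul_pos (Real.rpow_pos_of_pos hN _) (Real.rpow_pos_of_pos (Nat.cast_pos.2 hd) _)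
  by_cases hx : P x
  · calc ∑ ζ ∈ s with ∀ j, ζ j ≤ ζ x, mWeight g α ζ
        ≤ ∑ ζ ∈ s with ∀ j, ζ j ≤ ζ x, invA α ζ :=
          sum_le_sum fun ζ _ => mWeight_le_invA hg0 hg1 α ζ
      _ ≤ K / D := by
          refine sum_invA_le_of_forall_le_of_add_lt hα hd (x := x) fun ζ hζ => ?_
          obtain ⟨hζs, hmax⟩ := mem_filter.1 hζ
          obtain ⟨hconf, hlt⟩ := hs ζ hζs
          exact ⟨mem_configs_iff.1 hconf, hmax, hlt x hx⟩
      _ < (K + 1) / D := by gcongr; linarith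
  · set ρ := g x ^ ((k : ℝ)⁻¹)
    have hρ : 0 ≤ ((N : ℝ) + 1) ^ k * ρ ^ N :=
      mul_nonneg (by positivity) (pow_nonneg (Real.rpow_nonneg (hg0 x) _) _)
    calc ∑ ζ ∈ s with ∀ j, ζ j ≤ ζ x, mWeight g α ζ
        ≤ ((N : ℝ) + 1) ^ k * ρ ^ N := sum_mWeight_le_of_forall_le (by linarith) hg0 hg1
          fun ζ hζ => ⟨(hs ζ (mem_filter.1 hζ).1).1, (mem_filter.1 hζ).2⟩
      _ < 1 / D := by
          rw [lt_div_iff₀ hD]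
          calc ((N : ℝ) + 1) ^ k * ρ ^ N * D
              ≤ ((N : ℝ) + 1) ^ k * ρ ^ N * (N : ℝ) ^ (2 * α - 1) :=
                mul_le_mul_of_nonneg_left hDle hρ
            _ < 1 := by simpa only [mul_right_comm] using hdecay x hx
      _ ≤ (K + 1) / D := by gcongr; linarith

lemma sum_mWeight_lt_of_forall_add_lt [Nonempty ι] {α : ℝ} (hα : 2 ≤ α) (hg0 : ∀ x, 0 ≤ g x)
    (hg1 : ∀ x, g x ≤ 1) (P : ι → Prop) {d N : ℕ} (hd : 0 < d) (hdN : d ≤ N)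
    {s : Finset (ι → ℕ)} (hs : ∀ ζ ∈ s, ζ ∈ configs ι N ∧ ∀ x, P x → ζ x + d < N)
    (hdecay : ∀ x, ¬ P x → ((N : ℝ) + 1) ^ Fintype.card ι * (N : ℝ) ^ (2 * α - 1) *
      (g x ^ ((Fintype.card ι : ℝ)⁻¹)) ^ N < 1) :
    ∑ ζ ∈ s, mWeight g α ζ
      < Fintype.card ι * ((Fintype.card ι : ℝ) ^ α * tailConst (Fintype.card ι) α + 1) /
          ((N : ℝ) ^ α * (d : ℝ) ^ (α - 1)) :=
  calc ∑ ζ ∈ s, mWeight g α ζ ≤ ∑ x, ∑ ζ ∈ s with ∀ j, ζ j ≤ ζ x, mWeight g α ζ :=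
        sum_le_sum_sum_filter_forall_le s fun ζ _ => mWeight_nonneg hg0 α ζ
    _ < ∑ _x : ι, ((Fintype.card ι : ℝ) ^ α * tailConst (Fintype.card ι) α + 1) /
          ((N : ℝ) ^ α * (d : ℝ) ^ (α - 1)) :=
        sum_lt_sum_of_nonempty univ_nonempty fun x _ =>
          sum_mWeight_filter_forall_le_lt hα hg0 hg1 P hd hdN hs hdecay x
    _ = _ := by rw [sum_const, card_univ, nsmul_eq_mul, mul_div_assoc]

end Configurations

lemma tendsto_add_one_pow_mul_rpow_mul_pow (k : ℕ) (s : ℝ) {ρ : ℝ} (hρ0 : 0 ≤ ρ) (hρ1 : ρ < 1) :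
    Tendsto (fun N : ℕ => ((N : ℝ) + 1) ^ k * (N : ℝ) ^ s * ρ ^ N) atTop (𝓝 0) := by
  set p := ⌈s⌉₊
  have hlim : Tendsto (fun N : ℕ => 2 ^ k * ((N : ℝ) ^ (k + p) * ρ ^ N)) atTop (𝓝 0) := by
    simpa using (tendsto_pow_const_mul_const_pow_of_abs_lt_one (k + p)
      (abs_lt.2 ⟨by linarith, hρ1⟩)).const_mul (2 ^ k)
  refine squeeze_zero' (Eventually.of_forall fun N => by positivity) ?_ hlim
  filter_upwards [eventually_ge_atTop 1] with N hN
  have h1 : (1 : ℝ) ≤ N := Nat.one_le_cast.2 hN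
  have hs : (N : ℝ) ^ s ≤ (N : ℝ) ^ p := by
    rw [← Real.rpow_natCast]
    exact Real.rpow_le_rpow_of_exponent_le h1 (Nat.le_ceil s)
  calc ((N : ℝ) + 1) ^ k * (N : ℝ) ^ s * ρ ^ N ≤ (2 * N) ^ k * (N : ℝ) ^ p * ρ ^ N := by
        gcongr
        linarith
    _ = 2 ^ k * ((N : ℝ) ^ (k + p) * ρ ^ N) := by ring

lemma eventually_le_of_tendsto_div_nhds_zero {d : ℕ → ℕ}
    (hd : Tendsto (fun N => (d N : ℝ) / (N : ℝ)) atTop (𝓝 0)) : ∀ᶠ N in atTop, d N ≤ N := by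
  filter_upwards [hd.eventually_lt_const one_pos, eventually_gt_atTop 0] with N h hN
  rw [div_lt_one (Nat.cast_pos.2 hN)] at h
  exact_mod_cast h.le

theorem stmt_12_general {S : Type*} [Fintype S] (α : ℝ) (hα : 2 < α)
    (m : S → ℝ) (hm : ∀ x, 0 < m x)
    (Mstar : ℝ) (hMstar : IsGreatest (Set.range m) Mstar)
    (Sstar : Finset S) (hSstar : Sstar = Finset.univ.filter fun x => m x = Mstar)
    (mstar : S → ℝ) (hmstar : ∀ x, mstar x = m x / Mstar)
    (S₀ : Finset S) (hS₀ : S₀.Nonempty)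
    (d : ℕ → ℕ) (hdpos : ∀ N, 0 < d N)
    (hdN : Tendsto (fun N => (d N : ℝ) / (N : ℝ)) atTop (nhds 0)) :
    ∃ C : ℝ, 0 < C ∧ ∃ N₀ : ℕ, ∀ N : ℕ, N₀ < N →
      ∑ ζ ∈ (configs {x // x ∈ S₀} N).filter
          (fun ζ => ∀ x : {x // x ∈ S₀}, (x : S) ∈ Sstar → ζ x + d N < N),
        (∏ x : {x // x ∈ S₀}, mstar x.1 ^ ζ x) /
          ∏ x : {x // x ∈ S₀}, aZR α (ζ x) <
        C / ((N : ℝ) ^ α * (d N : ℝ) ^ (α - 1)) := by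
  have hM0 : 0 < Mstar := by
    obtain ⟨x, rfl⟩ := hMstar.1
    exact hm x
  have hg0 : ∀ x : S₀, 0 ≤ mstar x := fun x => by rw [hmstar]; exact (div_pos (hm x) hM0).le
  have hg1 : ∀ x : S₀, mstar x ≤ 1 := fun x => by
    rw [hmstar, div_le_one hM0]
    exact hMstar.2 ⟨x, rfl⟩
  have hlt1 : ∀ x : S₀, (x : S) ∉ Sstar → mstar x < 1 := fun x hx => by
    rw [hmstar, div_lt_one hM0]
    exact (hMstar.2 ⟨x, rfl⟩).lt_of_ne (by simpa [hSstar] using hx)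
  have : Nonempty S₀ := hS₀.to_subtype
  set k := Fintype.card S₀
  refine ⟨k * ((k : ℝ) ^ α * tailConst k α + 1),
    mul_pos (by positivity) (by have := tailConst_nonneg k α; positivity), ?_⟩
  have hdecay : ∀ᶠ N : ℕ in atTop, ∀ x : S₀, (x : S) ∉ Sstar →
      ((N : ℝ) + 1) ^ k * (N : ℝ) ^ (2 * α - 1) * (mstar x ^ ((k : ℝ)⁻¹)) ^ N < 1 :=
    eventually_all.2 fun x => by
      by_cases hx : (x : S) ∈ Sstar
      · exact Eventually.of_forall fun _ h => absurd hx h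
      refine ((tendsto_add_one_pow_mul_rpow_mul_pow k (2 * α - 1) (Real.rpow_nonneg (hg0 x) _)
        (Real.rpow_lt_one (hg0 x) (hlt1 x hx) (by positivity))).eventually_lt_const
          one_pos).mono fun N h _ => h
  obtain ⟨N₀, hN₀⟩ := eventually_atTop.1 (hdecay.and (eventually_le_of_tendsto_div_nhds_zero hdN))
  refine ⟨N₀, fun N hN => ?_⟩
  obtain ⟨hdecN, hdleN⟩ := hN₀ N hN.le
  exact sum_mWeight_lt_of_forall_add_lt hα.le hg0 hg1 (fun x : S₀ => (x : S) ∈ Sstar) (hdpos N)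
    hdleN (fun ζ hζ => mem_filter.1 hζ) hdecN

theorem stmt_12 {S : Type*} [Fintype S] (α : ℝ) (hα : 2 < α)
    (m : S → ℝ) (hm : ∀ x, 0 < m x)
    (Mstar : ℝ) (hMstar : IsGreatest (Set.range m) Mstar)
    (Sstar : Finset S) (hSstar : Sstar = Finset.univ.filter fun x => m x = Mstar)
    (mstar : S → ℝ) (hmstar : ∀ x, mstar x = m x / Mstar)
    (S₀ : Finset S) (hS₀ : S₀.Nonempty)
    (d : ℕ → ℕ) (hdpos : ∀ N, 0 < d N)
    (hd : Tendsto d atTop atTop)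
    (hdN : Tendsto (fun N => (d N : ℝ) / (N : ℝ)) atTop (nhds 0)) :
    ∃ C : ℝ, 0 < C ∧ ∃ N₀ : ℕ, ∀ N : ℕ, N₀ < N →
      ∑ ζ ∈ (configs {x // x ∈ S₀} N).filter
          (fun ζ => ∀ x : {x // x ∈ S₀}, (x : S) ∈ Sstar → ζ x + d N < N),
        (∏ x : {x // x ∈ S₀}, mstar x.1 ^ ζ x) /
          ∏ x : {x // x ∈ S₀}, aZR α (ζ x) <
        C / ((N : ℝ) ^ α * (d N : ℝ) ^ (α - 1)) :=
  stmt_12_general α hα m hm Mstar hMstar Sstar hSstar mstar hmstar S₀ hS₀ d hdpos hdN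
end
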